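/- arXiv:2510.03499 — 2 statements merged into one kernel-verified Lean document; each statement's English description precedes it below -/
import Mathlib

section
/- Let v be a leaf vertex of a banana tree G with unique neighbor w, let a = |E(v,w)| be the number of edges between v and w, and let G' = G − v. Then for every integer k > 0, f(G, v, k) = min{ f(G', w, a·⌊k/a⌋), a·⌈k/a⌉ − k + f(G', w, a·⌈k/a⌉) }. -/
open Finset

attribute [local instance] Classical.propDecidable

noncomputable section

/-- A finite loopless multigraph on vertex type `V`, given by a symmetric
edge-multiplicity function: `mul u v` is the number of edges joining `u` and `v`. -/
structure Multigraph (V : Type) [Fintype V] where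
  mul : V → V → ℕ
  symm : ∀ u v, mul u v = mul v u
  loopless : ∀ v, mul v v = 0

namespace Multigraph

variable {V : Type} [Fintype V]

/-- The underlying simple graph of a multigraph. -/
def underlying (G : Multigraph V) : SimpleGraph V where
  Adj u v := 0 < G.mul u v
  symm := by
    constructor
    intro u v h
    rwa [G.symm] at h
  loopless := by
    constructor
    intro v h
    simp [G.loopless] at h

/-- A multigraph is connected if its underlying simple graph is. -/
def Connected (G : Multigraph V) : Prop := G.underlying.Connected

/-- A banana tree is a multigraph whose underlying simple graph is a tree. -/
def IsBananaTree (G : Multigraph V) : Prop := G.underlying.IsTree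

/-- The valence (degree) of a vertex. -/
def valence (G : Multigraph V) (v : V) : ℕ := ∑ w, G.mul v w

/-- The number of edges of a multigraph. -/
def edgeCount (G : Multigraph V) : ℕ := (∑ u, ∑ v, G.mul u v) / 2

/-- The genus (first Betti number) `|E| - |V| + 1` of a connected multigraph. -/
def genus (G : Multigraph V) : ℕ := G.edgeCount + 1 - Fintype.card V

/-- The degree of a divisor: the total number of chips. -/
def degree (D : V → ℤ) : ℤ := ∑ v, D v

/-- A divisor is effective if it is nonnegative everywhere. -/
def Effective (D : V → ℤ) : Prop := ∀ v, 0 ≤ D v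

/-- Linear equivalence of divisors: `D'` is obtained from `D` by a finite sequence of
chip-firing moves, equivalently (for connected graphs) via an integral firing script `σ`. -/
def LinEquiv (G : Multigraph V) (D D' : V → ℤ) : Prop :=
  ∃ σ : V → ℤ, ∀ v, D' v = D v + ∑ w, (G.mul v w : ℤ) * (σ w - σ v)

/-- A divisor has positive rank if for every vertex `v` it is linearly equivalent to an
effective divisor placing at least one chip on `v`. -/
def PosRank (G : Multigraph V) (D : V → ℤ) : Prop :=
  ∀ v, ∃ D', G.LinEquiv D D' ∧ Effective D' ∧ 1 ≤ D' v

/-- The (divisorial) gonality: the minimum degree of a positive-rank effective divisor. -/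
def gonality (G : Multigraph V) : ℕ :=
  sInf {d : ℕ | ∃ D : V → ℤ, Effective D ∧ G.PosRank D ∧ degree D = (d : ℤ)}

/-- `f(G, v, k)`: the minimum degree of an effective divisor `D` on `G` such that
`D + k·v` has positive rank. -/
def fmin (G : Multigraph V) (v : V) (k : ℕ) : ℕ :=
  sInf {d : ℕ | ∃ D : V → ℤ, Effective D ∧
    G.PosRank (fun u => D u + if u = v then (k : ℤ) else 0) ∧ degree D = (d : ℤ)}

/-- Delete a vertex from a multigraph. -/
def deleteVertex (G : Multigraph V) (v : V) : Multigraph {u : V // u ≠ v} where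
  mul a b := G.mul a.1 b.1
  symm := fun a b => G.symm a.1 b.1
  loopless := fun a => G.loopless a.1

/-- Delete one single edge between `u` and `w` (if any) from a multigraph. -/
def deleteOneEdge (G : Multigraph V) (u w : V) : Multigraph V where
  mul x y := if (x = u ∧ y = w) ∨ (x = w ∧ y = u) then G.mul x y - 1 else G.mul x y
  symm := by
    intro x y
    by_cases h : (x = u ∧ y = w) ∨ (x = w ∧ y = u)
    · have h' : (y = u ∧ x = w) ∨ (y = w ∧ x = u) := by tauto
      simp [h, h', G.symm x y]
    · have h' : ¬((y = u ∧ x = w) ∨ (y = w ∧ x = u)) := by tauto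
      simp [h, h', G.symm x y]
  loopless := by
    intro v
    by_cases h : (v = u ∧ v = w) ∨ (v = w ∧ v = u)
    · simp [h, G.loopless]
    · simp [h, G.loopless]

/-- The adjacency move from `v` to `w` on a banana tree: the subset-firing move at the
connected component of `v` after removing the `v`-`w` edge bunch.  Its net effect is to
move `|E(v,w)|` chips from `v` to `w`. -/
def adjMove (G : Multigraph V) (v w : V) (D : V → ℤ) : V → ℤ :=
  fun u => if u = v then D u - (G.mul v w : ℤ)
    else if u = w then D u + (G.mul v w : ℤ) else D u

/-- A single legal adjacency move: both divisors are effective and the second is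
obtained from the first by an adjacency move between adjacent vertices. -/
def LegalAdjStep (G : Multigraph V) (D D' : V → ℤ) : Prop :=
  ∃ v w, G.underlying.Adj v w ∧ Effective D ∧ Effective D' ∧ D' = G.adjMove v w D

/-- A scramble: a collection of nonempty vertex sets (eggs), each inducing a connected
subgraph. -/
def IsScramble (G : Multigraph V) (S : Finset (Finset V)) : Prop :=
  ∀ X ∈ S, X.Nonempty ∧ (G.underlying.induce (X : Set V)).Connected

/-- A hitting set of a scramble: a set of vertices meeting every egg. -/
def IsHittingSet (S : Finset (Finset V)) (T : Finset V) : Prop :=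
  ∀ X ∈ S, (X ∩ T).Nonempty

/-- The hitting number of a scramble. -/
def hittingNumber (S : Finset (Finset V)) : ℕ∞ :=
  sInf {t : ℕ∞ | ∃ T : Finset V, IsHittingSet S T ∧ (T.card : ℕ∞) = t}

/-- The simple graph remaining after removing `c u w` of the edges of each bunch. -/
def cutGraph (G : Multigraph V) (c : V → V → ℕ) : SimpleGraph V where
  Adj u w := u ≠ w ∧ c u w < G.mul u w ∧ c w u < G.mul w u
  symm := ⟨fun u w h => ⟨h.1.symm, h.2.2, h.2.1⟩⟩
  loopless := ⟨fun u h => h.1 rfl⟩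

/-- `c` describes an egg-cut of the scramble `S`: a set of edges of `G` (given by the
number `c u w` of edges removed from each bunch) whose removal leaves at least two
connected components each completely containing an egg. -/
def IsEggCut (G : Multigraph V) (S : Finset (Finset V)) (c : V → V → ℕ) : Prop :=
  (∀ u w, c u w = c w u) ∧ (∀ u w, c u w ≤ G.mul u w) ∧
  ∃ X₁ ∈ S, ∃ X₂ ∈ S,
    (∀ x ∈ X₁, ∀ y ∈ X₁, (G.cutGraph c).Reachable x y) ∧
    (∀ x ∈ X₂, ∀ y ∈ X₂, (G.cutGraph c).Reachable x y) ∧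
    (∀ x ∈ X₁, ∀ y ∈ X₂, ¬ (G.cutGraph c).Reachable x y)

/-- The egg-cut number of a scramble (`⊤` if no egg-cut exists). -/
def eggCutNumber (G : Multigraph V) (S : Finset (Finset V)) : ℕ∞ :=
  sInf {t : ℕ∞ | ∃ c : V → V → ℕ, G.IsEggCut S c ∧
    ((∑ u, ∑ w, c u w : ℕ) : ℕ∞) = 2 * t}

/-- The order of a scramble: the minimum of its hitting number and egg-cut number. -/
def scrambleOrder (G : Multigraph V) (S : Finset (Finset V)) : ℕ∞ :=
  min (hittingNumber S) (G.eggCutNumber S)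

/-- The scramble number of a multigraph: the maximum order of a scramble on it. -/
def scrambleNumber (G : Multigraph V) : ℕ∞ :=
  sSup {m : ℕ∞ | ∃ S : Finset (Finset V), G.IsScramble S ∧ G.scrambleOrder S = m}

/-- The weight of a node `t` in a tree-cut decomposition `(T, X)`: the number of vertices
mapped to `t` plus the number of edges routed through `t` with neither endpoint mapped
to `t`. -/
def nodeWeight (G : Multigraph V) {N : Type} [Fintype N] (T : SimpleGraph N)
    (X : V → N) (t : N) : ℕ :=
  (Finset.univ.filter fun v => X v = t).card +
    (∑ u, ∑ w, if X u ≠ t ∧ X w ≠ t ∧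
        ¬ (T.deleteEdges {e | t ∈ e}).Reachable (X u) (X w)
      then G.mul u w else 0) / 2

/-- The weight of a link `pq` in a tree-cut decomposition `(T, X)`: the number of edges
of `G` routed through that link. -/
def linkWeight (G : Multigraph V) {N : Type} (T : SimpleGraph N)
    (X : V → N) (p q : N) : ℕ :=
  (∑ u, ∑ w, if ¬ (T.deleteEdges {s(p, q)}).Reachable (X u) (X w)
    then G.mul u w else 0) / 2

/-- The width of a tree-cut decomposition `(T, X)`: the maximum of all node and link
weights. -/
def tcdWidth (G : Multigraph V) {N : Type} [Fintype N] (T : SimpleGraph N)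
    (X : V → N) : ℕ :=
  max (Finset.univ.sup fun t => G.nodeWeight T X t)
      (Finset.univ.sup fun p : N × N =>
        if T.Adj p.1 p.2 then G.linkWeight T X p.1 p.2 else 0)

/-- The screewidth of a multigraph: the minimum width of a tree-cut decomposition. -/
def screewidth (G : Multigraph V) : ℕ :=
  sInf {w : ℕ | ∃ (m : ℕ) (T : SimpleGraph (Fin m)), T.IsTree ∧
    ∃ X : V → Fin m, G.tcdWidth T X = w}

/-- The banana path on `n+1` vertices `v_0, …, v_n`, with `a i` edges joining
`v_i` and `v_{i+1}` (for `0 ≤ i < n`). -/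
def bananaPath (n : ℕ) (a : ℕ → ℕ) : Multigraph (Fin (n + 1)) where
  mul i j := if i.val + 1 = j.val then a i.val else if j.val + 1 = i.val then a j.val else 0
  symm := by
    intro u v
    try dsimp only
    split_ifs <;> first | rfl | (exfalso; omega)
  loopless := by
    intro v
    have h : ¬ (v.val + 1 = v.val) := by omega
    simp [h]

/-- The banana star with central vertex `Sum.inl ()` and, for each `i : Fin k`,
`r i` leaves joined to the center by `a i` parallel edges. -/
def bananaStar (k : ℕ) (a r : Fin k → ℕ) :
    Multigraph (Unit ⊕ (Σ i : Fin k, Fin (r i))) where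
  mul x y :=
    match x, y with
    | Sum.inl _, Sum.inr ⟨i, _⟩ => a i
    | Sum.inr ⟨i, _⟩, Sum.inl _ => a i
    | _, _ => 0
  symm := by
    intro u v
    rcases u with u | ⟨i, li⟩ <;> rcases v with v | ⟨j, lj⟩ <;> rfl
  loopless := by
    intro v
    rcases v with v | ⟨i, li⟩ <;> rfl

end Multigraph

/-! Firing the leaf `v` moves exactly `a = |E(v,w)|` chips from `v` to `w` and changes nothing
else, and a firing script on `G` restricts to one on `G - v` at the cost of such transfers.
So if `D + k·v` has positive rank on `G`, then `D|_{G-v} + a⌊(D(v)+k)/a⌋·w` has positive rank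
on `G - v`; conversely, if `D' + at·w` has positive rank on `G - v`, then `D'` together with
`at - k` chips on `v` is admissible for `f(G, v, k)`. Comparing the multiple `a⌊(D(v)+k)/a⌋`
of `a` with `a⌊k/a⌋` and `a⌈k/a⌉` gives the two terms of the minimum. -/

namespace Multigraph

variable {V : Type}

-- `D + n·v`, written as in `fmin` so that the two agree definitionally
def addChips (D : V → ℤ) (v : V) (n : ℤ) : V → ℤ := fun u => D u + if u = v then n else 0

def extendAt (v : V) (D : {u // u ≠ v} → ℤ) (c : ℤ) : V → ℤ :=
  fun x => if h : x = v then c else D ⟨x, h⟩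

@[simp]
theorem extendAt_self (v : V) (D : {u // u ≠ v} → ℤ) (c : ℤ) : extendAt v D c v = c := by
  simp [extendAt]

@[simp]
theorem extendAt_val {v : V} (D : {u // u ≠ v} → ℤ) (c : ℤ) (x : {u // u ≠ v}) :
    extendAt v D c x = D x := by
  simp [extendAt, x.2]

theorem addChips_extendAt_self (v : V) (D : {u // u ≠ v} → ℤ) (c n : ℤ) :
    addChips (extendAt v D c) v n = extendAt v D (c + n) := by
  ext x
  by_cases hx : x = v
  · subst hx
    simp [addChips]
  · simp [addChips, extendAt, hx]

theorem addChips_addChips (D : V → ℤ) (v : V) (m n : ℤ) :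
    addChips (addChips D v m) v n = addChips D v (m + n) := by
  ext x
  simp only [addChips]
  split_ifs <;> ring

theorem Effective.extendAt {v : V} {D : {u // u ≠ v} → ℤ} (hD : Effective D) {c : ℤ}
    (hc : 0 ≤ c) : Effective (extendAt v D c) := fun x => by
  by_cases hx : x = v
  · simp [Multigraph.extendAt, hx, hc]
  · simpa [Multigraph.extendAt, hx] using hD ⟨x, hx⟩

theorem Effective.addChips {D : V → ℤ} (hD : Effective D) (v : V) {n : ℤ} (hn : 0 ≤ n) :
    Effective (addChips D v n) := fun x =>
  add_nonneg (hD x) (by split_ifs <;> omega)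

variable [Fintype V]

theorem degree_eq_add_sum_ne (D : V → ℤ) (v : V) :
    degree D = D v + degree (fun x : {u // u ≠ v} => D x) :=
  Fintype.sum_eq_add_sum_subtype_ne D v

theorem degree_addChips (D : V → ℤ) (v : V) (n : ℤ) :
    degree (addChips D v n) = degree D + n := by
  simp [degree, addChips, Finset.sum_add_distrib]

variable {G : Multigraph V}

namespace LinEquiv

theorem refl (D : V → ℤ) : G.LinEquiv D D := ⟨0, by simp⟩

theorem addChips {D E : V → ℤ} (h : G.LinEquiv D E) (v : V) (n : ℤ) :
    G.LinEquiv (addChips D v n) (addChips E v n) := by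
  obtain ⟨σ, hσ⟩ := h
  exact ⟨σ, fun x => by simp only [Multigraph.addChips, hσ x]; ring⟩

end LinEquiv

theorem PosRank.mono {D D' : V → ℤ} (h : G.PosRank D) (hle : ∀ x, D x ≤ D' x) :
    G.PosRank D' := by
  intro u
  obtain ⟨E, ⟨σ, hσ⟩, hE, hEu⟩ := h u
  refine ⟨fun x => E x + (D' x - D x), ⟨σ, fun x => by simp only [hσ x]; ring⟩,
    fun x => ?_, ?_⟩
  · linarith [hE x, hle x]
  · linarith [hle u]

theorem posRank_of_forall_one_le {D : V → ℤ} (h : ∀ x, 1 ≤ D x) : G.PosRank D :=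
  fun u => ⟨D, LinEquiv.refl D, fun x => by linarith [h x], h u⟩

theorem fmin_le_degree {v : V} {k : ℕ} {D : V → ℤ} (hD : Effective D)
    (h : G.PosRank (addChips D v k)) : (G.fmin v k : ℤ) ≤ degree D := by
  have hdeg : 0 ≤ degree D := Finset.sum_nonneg fun x _ => hD x
  have : G.fmin v k ≤ (degree D).toNat := Nat.sInf_le ⟨D, hD, h, by omega⟩
  omega

theorem exists_degree_eq_fmin (v : V) (k : ℕ) :
    ∃ D : V → ℤ, Effective D ∧ G.PosRank (addChips D v k) ∧ degree D = G.fmin v k := by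
  refine Nat.sInf_mem (s := {d : ℕ | ∃ D : V → ℤ, Effective D ∧ G.PosRank (addChips D v k) ∧
    degree D = d}) ?_
  exact ⟨Fintype.card V, fun _ => 1, fun _ => zero_le_one,
    posRank_of_forall_one_le fun x => by simp only [addChips]; split_ifs <;> omega,
    by simp [degree]⟩

theorem fmin_le_degree_add_sub {v : V} {j : ℕ} (k : ℕ) {D : V → ℤ} (hD : Effective D)
    (h : G.PosRank (addChips D v j)) : (G.fmin v k : ℤ) ≤ degree D + (j - k : ℕ) := by
  rw [← degree_addChips]
  refine fmin_le_degree (hD.addChips v (Int.natCast_nonneg _)) (h.mono fun x => ?_)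
  simp only [addChips]
  split_ifs <;> omega

section Leaf

variable (G) {v w : V}

theorem mul_eq_ite_of_leaf (hleaf : ∀ u, G.underlying.Adj v u → u = w) (x : V) :
    G.mul x v = if x = w then G.mul v w else 0 := by
  rw [G.symm]
  split_ifs with hx
  · rw [hx]
  · by_contra h
    exact hx (hleaf x (Nat.pos_of_ne_zero h))

theorem sum_mul_of_leaf (hleaf : ∀ u, G.underlying.Adj v u → u = w) (f : V → ℤ) :
    ∑ y, (G.mul v y : ℤ) * f y = G.mul v w * f w := by
  refine Finset.sum_eq_single w (fun y _ hy => ?_) (by simp)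
  rw [G.symm, mul_eq_ite_of_leaf G hleaf, if_neg hy, Nat.cast_zero, zero_mul]

theorem sum_mul_sub_eq_addChips (hleaf : ∀ u, G.underlying.Adj v u → u = w) (hne : w ≠ v)
    (σ : V → ℤ) (x : {u // u ≠ v}) :
    ∑ y, (G.mul x y : ℤ) * (σ y - σ x) =
      addChips (fun x => ∑ y, ((G.deleteVertex v).mul x y : ℤ) * (σ y - σ x))
        ⟨w, hne⟩ (G.mul v w * (σ v - σ w)) x := by
  rw [Fintype.sum_eq_add_sum_subtype_ne _ v, mul_eq_ite_of_leaf G hleaf, addChips, add_comm]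
  by_cases hx : x = ⟨w, hne⟩
  · subst hx
    simp [deleteVertex]
  · have hxw : (x : V) ≠ w := fun h => hx (Subtype.ext h)
    simp [hx, hxw, deleteVertex]

theorem exists_linEquiv_deleteVertex (hleaf : ∀ u, G.underlying.Adj v u → u = w) (hne : w ≠ v)
    {D E : V → ℤ} (h : G.LinEquiv D E) :
    ∃ q : ℤ, E v = D v - G.mul v w * q ∧ (G.deleteVertex v).LinEquiv
      (addChips (fun x => D x) ⟨w, hne⟩ (G.mul v w * q)) (fun x => E x) := by
  obtain ⟨σ, hσ⟩ := h
  refine ⟨σ v - σ w, ?_, fun x => σ x, fun x => ?_⟩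
  · rw [hσ v, sum_mul_of_leaf G hleaf]
    ring
  · dsimp only
    rw [hσ x, sum_mul_sub_eq_addChips G hleaf hne]
    simp only [addChips]
    ring

theorem linEquiv_extendAt (hleaf : ∀ u, G.underlying.Adj v u → u = w) (hne : w ≠ v)
    {D E : {u // u ≠ v} → ℤ} {q : ℤ}
    (h : (G.deleteVertex v).LinEquiv (addChips D ⟨w, hne⟩ (G.mul v w * q)) E) (c : ℤ) :
    G.LinEquiv (extendAt v D c) (extendAt v E (c - G.mul v w * q)) := by
  obtain ⟨σ, hσ⟩ := h
  refine ⟨extendAt v σ (σ ⟨w, hne⟩ + q), fun x => ?_⟩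
  by_cases hx : x = v
  · subst hx
    rw [sum_mul_of_leaf G hleaf]
    simp only [extendAt, dif_neg hne, ↓reduceDIte]
    ring
  · lift x to {u // u ≠ v} using hx
    rw [sum_mul_sub_eq_addChips G hleaf hne]
    simp only [extendAt_val, extendAt_self, hσ x, addChips]
    split_ifs
    · simp only [extendAt, dif_neg hne]
      ring
    · ring

theorem posRank_extendAt (hleaf : ∀ u, G.underlying.Adj v u → u = w) (hne : w ≠ v)
    {D : {u // u ≠ v} → ℤ} (hD : Effective D) {q c : ℤ}
    (h : (G.deleteVertex v).PosRank (addChips D ⟨w, hne⟩ (G.mul v w * q)))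
    (hc : 1 ≤ c) (hqc : G.mul v w * q ≤ c) :
    G.PosRank (extendAt v D c) := by
  intro u
  by_cases hu : u = v
  · subst hu
    exact ⟨_, LinEquiv.refl _, hD.extendAt (by omega), by simpa⟩
  · obtain ⟨E, hE, hEeff, hEu⟩ := h ⟨u, hu⟩
    exact ⟨_, linEquiv_extendAt G hleaf hne hE c, hEeff.extendAt (by omega),
      by simpa [extendAt, hu] using hEu⟩

theorem posRank_deleteVertex (hleaf : ∀ u, G.underlying.Adj v u → u = w) (hne : w ≠ v)
    {D : V → ℤ} (h : G.PosRank D) :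
    (G.deleteVertex v).PosRank
      (addChips (fun x => D x) ⟨w, hne⟩ (G.mul v w * (D v / G.mul v w))) := by
  intro u
  obtain ⟨E, hE, hEeff, hEu⟩ := h u
  obtain ⟨q, hEv, hlin⟩ := exists_linEquiv_deleteVertex G hleaf hne hE
  have hq : G.mul v w * q ≤ G.mul v w * (D v / G.mul v w) := by
    rcases Nat.eq_zero_or_pos (G.mul v w) with h0 | h0
    · simp [h0]
    · exact mul_le_mul_of_nonneg_left
        (Int.le_ediv_of_mul_le (by exact_mod_cast h0) (by linarith [hEeff v])) (by positivity)
  have hmove := hlin.addChips ⟨w, hne⟩ (G.mul v w * (D v / G.mul v w) - G.mul v w * q)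
  rw [addChips_addChips, add_sub_cancel] at hmove
  have hEeff' : Effective fun x : {u // u ≠ v} => E x := fun x => hEeff x
  refine ⟨_, hmove, hEeff'.addChips _ (sub_nonneg.2 hq), ?_⟩
  simp only [addChips]
  split_ifs <;> linarith

theorem fmin_le_sub_add_fmin_deleteVertex (hleaf : ∀ u, G.underlying.Adj v u → u = w)
    (hne : w ≠ v) {k : ℕ} (hk : 0 < k) (t : ℕ) :
    G.fmin v k ≤ G.mul v w * t - k + (G.deleteVertex v).fmin ⟨w, hne⟩ (G.mul v w * t) := by
  obtain ⟨D, hD, hpr, hdeg⟩ :=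
    exists_degree_eq_fmin (G := G.deleteVertex v) ⟨w, hne⟩ (G.mul v w * t)
  push_cast at hpr
  have hle := fmin_le_degree (G := G) (k := k)
    (hD.extendAt (Int.natCast_nonneg (G.mul v w * t - k)))
    (by
      rw [addChips_extendAt_self]
      exact posRank_extendAt G hleaf hne hD hpr (by omega) (by omega))
  rw [degree_eq_add_sum_ne _ v] at hle
  simp only [extendAt_self, extendAt_val, hdeg] at hle
  omega

theorem exists_fmin_eq_add_and_fmin_deleteVertex_le
    (hleaf : ∀ u, G.underlying.Adj v u → u = w) (hne : w ≠ v) (k : ℕ) :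
    ∃ c e : ℕ, G.fmin v k = c + e ∧ ∀ j, (G.deleteVertex v).fmin ⟨w, hne⟩ j ≤
      e + (G.mul v w * ((c + k) / G.mul v w) - j) := by
  obtain ⟨D, hD, hpr, hdeg⟩ := exists_degree_eq_fmin (G := G) v k
  have hrest := posRank_deleteVertex G hleaf hne hpr
  have hc : 0 ≤ D v := hD v
  have he : 0 ≤ degree (fun x : {u // u ≠ v} => D x) := Finset.sum_nonneg fun x _ => hD x
  refine ⟨(D v).toNat, (degree fun x : {u // u ≠ v} => D x).toNat, ?_, fun j => ?_⟩
  · rw [degree_eq_add_sum_ne D v] at hdeg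
    omega
  · have hmult : G.mul v w * (addChips D v k v / G.mul v w) =
        ((G.mul v w * (((D v).toNat + k) / G.mul v w) : ℕ) : ℤ) := by
      simp [addChips, Int.toNat_of_nonneg hc]
    have hoff : (fun x : {u // u ≠ v} => addChips D v k x) = fun x : {u // u ≠ v} => D x := by
      ext x
      simp [addChips, x.2]
    rw [hmult, hoff] at hrest
    have := fmin_le_degree_add_sub j (fun x : {u // u ≠ v} => hD x) hrest
    omega

end Leaf

theorem min_le_of_forall_le_add_sub_mul_div {a k c e : ℕ} {F : ℕ → ℕ}
    (hF : ∀ j, F j ≤ e + (a * ((c + k) / a) - j)) :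
    min (F (a * (k / a))) (a * ((k + a - 1) / a) - k + F (a * ((k + a - 1) / a))) ≤ c + e := by
  rcases Nat.eq_zero_or_pos a with rfl | ha
  · simpa using le_add_left (hF 0)
  have hkM : k ≤ a * ((k + a - 1) / a) := by
    have := Nat.div_add_mod (k + a - 1) a
    have := Nat.mod_lt (k + a - 1) ha
    omega
  have hS : a * ((c + k) / a) ≤ c + k := Nat.mul_div_le (c + k) a
  -- a multiple of `a` that is below `a⌈k/a⌉` is at most `a⌊k/a⌋`
  by_cases hMS : a * ((k + a - 1) / a) ≤ a * ((c + k) / a)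
  · have := hF (a * ((k + a - 1) / a))
    omega
  · have hceil : (k + a - 1) / a ≤ k / a + 1 := by
      calc (k + a - 1) / a ≤ (k + a) / a := Nat.div_le_div_right (by omega)
        _ = k / a + 1 := Nat.add_div_right k ha
    have hlt := Nat.lt_of_mul_lt_mul_left (lt_of_not_ge hMS)
    have := hF (a * (k / a))
    have : a * ((c + k) / a) ≤ a * (k / a) := Nat.mul_le_mul_left a (by omega)
    omega

end Multigraph

open Multigraph in
theorem fmin_leaf_recursion_pos_general
    {V : Type} [Fintype V] (G : Multigraph V)
    (v w : V)
    (hleaf : ∀ u, G.underlying.Adj v u → u = w)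
    (hne : w ≠ v) (a : ℕ) (ha : a = G.mul v w)
    (k : ℕ) (hk : 0 < k) :
    G.fmin v k = min ((G.deleteVertex v).fmin ⟨w, hne⟩ (a * (k / a)))
      (a * ((k + a - 1) / a) - k + (G.deleteVertex v).fmin ⟨w, hne⟩ (a * ((k + a - 1) / a))) := by
  subst ha
  refine le_antisymm (le_min ?_ (fmin_le_sub_add_fmin_deleteVertex G hleaf hne hk _)) ?_
  · simpa [Nat.sub_eq_zero_of_le (Nat.mul_div_le k _)] using
      fmin_le_sub_add_fmin_deleteVertex G hleaf hne hk (k / G.mul v w)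
  · obtain ⟨c, e, hce, hF⟩ := exists_fmin_eq_add_and_fmin_deleteVertex_le G hleaf hne k
    exact hce ▸ min_le_of_forall_le_add_sub_mul_div hF

open Multigraph in
/-- For a leaf `v` of a banana tree `G` with unique neighbor `w`,
`a = |E(v,w)|`, `G' = G - v`, and any `k > 0`, we have
`f(G, v, k) = min { f(G', w, a·⌊k/a⌋), a·⌈k/a⌉ - k + f(G', w, a·⌈k/a⌉) }`
(here `⌊k/a⌋ = k / a` and `⌈k/a⌉ = (k + a - 1) / a` in natural-number arithmetic). -/
theorem fmin_leaf_recursion_pos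
    {V : Type} [Fintype V] (G : Multigraph V) (hG : G.IsBananaTree)
    (v w : V) (hvw : G.underlying.Adj v w)
    (hleaf : ∀ u, G.underlying.Adj v u → u = w)
    (hne : w ≠ v) (a : ℕ) (ha : a = G.mul v w)
    (k : ℕ) (hk : 0 < k) :
    G.fmin v k = min ((G.deleteVertex v).fmin ⟨w, hne⟩ (a * (k / a)))
      (a * ((k + a - 1) / a) - k + (G.deleteVertex v).fmin ⟨w, hne⟩ (a * ((k + a - 1) / a))) :=
  fmin_leaf_recursion_pos_general G v w hleaf hne a ha k hk
end
end

section
/- The banana path B_{(3,3,3)} (four vertices v_0, v_1, v_2, v_3 with 3 edges between each consecutive pair) has gonality 3, and the banana path B_{(3,2,3)} obtained from it by deleting one edge of the middle edge bunch has gonality 4. -/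
open Finset

attribute [local instance] Classical.propDecidable

noncomputable section

/-!
Chip-firing moves chips only along edges, so the number of chips on a vertex set `S` is
invariant modulo any common divisor of the multiplicities of the edges leaving `S`.

On `B_{(3,3,3)}` all multiplicities are `3`, so a divisor of degree `< 3` cannot change at
all and would need a chip on each of the four vertices; on the other hand `3·v₀` is
equivalent to every `3·vᵢ`, by firing `{v₀, …, vⱼ}` for `j < i`. Hence the gonality is `3`.

On `B_{(3,2,3)}` the chips on `v₀` and on `v₃` modulo `3` and the chips on `{v₀, v₁}`
modulo `2` are invariant; for an effective divisor of degree `≤ 3` these three residues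
leave too little freedom to put a chip on every vertex, while `v₀ + v₁ + v₂ + v₃` trivially
has positive rank. Hence the gonality is `4`.
-/

namespace Multigraph

section Divisors

variable {V : Type} [Fintype V] {G : Multigraph V} {D D' D'' : V → ℤ}

theorem LinEquiv.refl_s15 (G : Multigraph V) (D : V → ℤ) : G.LinEquiv D D :=
  ⟨0, fun v => by simp⟩

theorem LinEquiv.trans (h : G.LinEquiv D D') (h' : G.LinEquiv D' D'') : G.LinEquiv D D'' := by
  obtain ⟨σ, hσ⟩ := h
  obtain ⟨τ, hτ⟩ := h'
  refine ⟨σ + τ, fun v => ?_⟩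
  rw [hτ, hσ, add_assoc, ← Finset.sum_add_distrib]
  congr 1
  exact Finset.sum_congr rfl fun w _ => by simp only [Pi.add_apply]; ring

theorem LinEquiv.sum_modEq (h : G.LinEquiv D D') {S : Finset V} {m : ℤ}
    (hS : ∀ u ∈ S, ∀ w ∉ S, m ∣ G.mul u w) :
    ∑ v ∈ S, D' v ≡ ∑ v ∈ S, D v [ZMOD m] := by
  obtain ⟨σ, hσ⟩ := h
  set flow : V → V → ℤ := fun v w => (G.mul v w : ℤ) * (σ w - σ v)
  have internal : ∑ v ∈ S, ∑ w ∈ S, flow v w = 0 := by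
    have antisymm : ∑ v ∈ S, ∑ w ∈ S, flow v w = -∑ v ∈ S, ∑ w ∈ S, flow v w := by
      conv_lhs => rw [Finset.sum_comm]
      rw [← Finset.sum_neg_distrib]
      refine Finset.sum_congr rfl fun v _ => ?_
      rw [← Finset.sum_neg_distrib]
      refine Finset.sum_congr rfl fun w _ => ?_
      simp only [flow, G.symm v w]
      ring
    linarith
  have split : ∑ v ∈ S, D' v = ∑ v ∈ S, D v + ∑ v ∈ S, ∑ w ∈ Sᶜ, flow v w := by
    simp only [hσ, Finset.sum_add_distrib]
    rw [add_right_inj, Finset.sum_congr rfl fun v _ => (Finset.sum_add_sum_compl S (flow v)).symm,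
      Finset.sum_add_distrib, internal, zero_add]
  rw [split, Int.modEq_comm, Int.modEq_iff_dvd, add_sub_cancel_left]
  exact Finset.dvd_sum fun v hv => Finset.dvd_sum fun w hw =>
    (hS v hv w (Finset.mem_compl.mp hw)).mul_right _

theorem LinEquiv.degree_eq (h : G.LinEquiv D D') : degree D' = degree D :=
  Int.modEq_zero_iff.mp (h.sum_modEq (S := Finset.univ) (m := 0) (by simp))

theorem LinEquiv.modEq_of_dvd (h : G.LinEquiv D D') {m : ℤ} (hm : ∀ u w, m ∣ G.mul u w)
    (v : V) : D' v ≡ D v [ZMOD m] := by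
  simpa using h.sum_modEq (S := {v}) fun u _ w _ => hm u w

theorem Effective.le_degree (hD : Effective D) (v : V) : D v ≤ degree D :=
  Finset.single_le_sum (fun u _ => hD u) (Finset.mem_univ v)

theorem PosRank.of_one_le (h : ∀ v, 1 ≤ D v) : G.PosRank D :=
  fun v => ⟨D, LinEquiv.refl_s15 G D, fun u => zero_le_one.trans (h u), h v⟩

theorem gonality_le {d : ℕ} (hD : Effective D) (hpr : G.PosRank D) (hdeg : degree D = d) :
    G.gonality ≤ d :=
  Nat.sInf_le ⟨D, hD, hpr, hdeg⟩

theorem gonality_le_card (G : Multigraph V) : G.gonality ≤ Fintype.card V :=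
  gonality_le (D := 1) (fun _ => zero_le_one) (PosRank.of_one_le fun _ => le_rfl)
    (by simp [degree])

theorem le_gonality {d : ℕ} (h : ∀ D, Effective D → G.PosRank D → (d : ℤ) ≤ degree D) :
    d ≤ G.gonality := by
  refine le_csInf ⟨Fintype.card V, 1, fun _ => zero_le_one, PosRank.of_one_le fun _ => le_rfl,
    by simp [degree]⟩ ?_
  rintro e ⟨D, hD, hpr, hdeg⟩
  exact_mod_cast hdeg ▸ h D hD hpr

/-- Below degree `m` chip-firing cannot change an effective divisor at all, so positive rank
forces a chip on every vertex. -/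
theorem min_le_degree_of_posRank {m : ℕ} (hm : ∀ u w, (m : ℤ) ∣ G.mul u w)
    (hD : Effective D) (hpr : G.PosRank D) : min (m : ℤ) (Fintype.card V) ≤ degree D := by
  by_contra! hlt
  have hsmall : degree D < m := hlt.trans_le (min_le_left _ _)
  have hcover : ∀ v, 1 ≤ D v := by
    intro v
    obtain ⟨E, hDE, hE, hv⟩ := hpr v
    have hEv : E v < m := (hE.le_degree v).trans_lt (hDE.degree_eq ▸ hsmall)
    have hDv : D v < m := (hD.le_degree v).trans_lt hsmall
    have hmod : E v % m = D v % m := hDE.modEq_of_dvd hm v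
    rw [Int.emod_eq_of_lt (hE v) hEv, Int.emod_eq_of_lt (hD v) hDv] at hmod
    exact hmod ▸ hv
  have hcard : (Fintype.card V : ℤ) ≤ degree D := by
    simpa [degree] using Finset.sum_le_sum fun v (_ : v ∈ Finset.univ) => hcover v
  exact hlt.not_ge (min_le_of_right_le hcard)

end Divisors

section BananaPath

variable {n : ℕ} {a : ℕ → ℕ}

theorem bananaPath_mul_dvd {m : ℕ} (h : ∀ i, m ∣ a i) (u w : Fin (n + 1)) :
    (m : ℤ) ∣ (bananaPath n a).mul u w := by
  simp only [bananaPath]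
  split_ifs <;> simp [Int.natCast_dvd_natCast, h]

theorem bananaPath_mul_castSucc_succ (k : Fin n) :
    (bananaPath n a).mul k.castSucc k.succ = a k := by
  simp [bananaPath]

/-- Firing the vertices `v_0, …, v_k` moves `a k` chips across the `k`-th bunch. -/
theorem bananaPath_linEquiv_adjMove (D : Fin (n + 1) → ℤ) (k : Fin n) :
    (bananaPath n a).LinEquiv D ((bananaPath n a).adjMove k.castSucc k.succ D) := by
  refine ⟨fun w => if w ≤ k.castSucc then 1 else 0, fun v => ?_⟩
  have no_flow : ∀ w, ¬(v = k.castSucc ∧ w = k.succ) → ¬(v = k.succ ∧ w = k.castSucc) →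
      ((bananaPath n a).mul v w : ℤ) *
        ((if w ≤ k.castSucc then 1 else 0) - if v ≤ k.castSucc then 1 else 0) = 0 := by
    intro w h₁ h₂
    simp only [bananaPath]
    split_ifs <;> simp_all [Fin.ext_iff, Fin.le_iff_val_le_val] <;> omega
  by_cases hv : v = k.castSucc
  · subst hv
    rw [Finset.sum_eq_single k.succ
      (fun w _ hw => no_flow w (by simp [hw]) (by simp [(Fin.castSucc_lt_succ (i := k)).ne]))
      (by simp)]
    simp [adjMove, bananaPath_mul_castSucc_succ, Fin.le_iff_val_le_val, sub_eq_add_neg]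
  by_cases hv' : v = k.succ
  · subst hv'
    rw [Finset.sum_eq_single k.castSucc
      (fun w _ hw => no_flow w (by simp [(Fin.castSucc_lt_succ (i := k)).ne']) (by simp [hw]))
      (by simp)]
    simp [adjMove, (bananaPath n a).symm k.succ, bananaPath_mul_castSucc_succ, hv,
      Fin.le_iff_val_le_val]
  · rw [Finset.sum_eq_zero fun w _ => no_flow w (by simp [hv]) (by simp [hv'])]
    simp [adjMove, hv, hv']

/-- The only bunch joining `v_0, …, v_k` to the rest of the path is the `k`-th one. -/
theorem LinEquiv.bananaPath_prefix_sum_modEq {D D' : Fin (n + 1) → ℤ}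
    (h : (bananaPath n a).LinEquiv D D') (k : ℕ) :
    ∑ v ∈ Finset.univ.filter (fun v : Fin (n + 1) => v.val ≤ k), D' v ≡
      ∑ v ∈ Finset.univ.filter (fun v : Fin (n + 1) => v.val ≤ k), D v [ZMOD a k] := by
  refine h.sum_modEq fun u hu w hw => ?_
  simp only [Finset.mem_filter, Finset.mem_univ, true_and] at hu hw
  simp only [bananaPath]
  split_ifs with h₁ h₂
  · obtain rfl : u.val = k := by omega
    exact dvd_rfl
  · omega
  · simp

theorem bananaPath_const_linEquiv_single (m : ℕ) (k : Fin (n + 1)) :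
    (bananaPath n fun _ => m).LinEquiv (fun u => if u = 0 then (m : ℤ) else 0)
      (fun u => if u = k then (m : ℤ) else 0) := by
  induction k using Fin.induction with
  | zero => exact LinEquiv.refl_s15 _ _
  | succ k ih =>
    refine ih.trans ?_
    convert bananaPath_linEquiv_adjMove _ k using 1
    funext u
    simp only [adjMove, bananaPath_mul_castSucc_succ]
    split_ifs <;> simp_all [(Fin.castSucc_lt_succ (i := k)).ne]

theorem bananaPath_const_posRank {m : ℕ} (hm : 0 < m) :
    (bananaPath n fun _ => m).PosRank (fun u => if u = 0 then (m : ℤ) else 0) :=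
  fun v => ⟨_, bananaPath_const_linEquiv_single m v,
    fun u => by dsimp only; split_ifs <;> positivity, by simpa using Nat.one_le_of_lt hm⟩

theorem gonality_bananaPath_const {m : ℕ} (hm : 0 < m) :
    (bananaPath n fun _ => m).gonality = min m (n + 1) := by
  refine le_antisymm (le_min ?_ ?_) (le_gonality fun D hD hpr => ?_)
  · exact gonality_le (fun u => by split_ifs <;> positivity) (bananaPath_const_posRank hm)
      (by simp [degree])
  · simpa using gonality_le_card (bananaPath n fun _ => m)
  · simpa using min_le_degree_of_posRank (bananaPath_mul_dvd fun _ => dvd_rfl) hD hpr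

theorem PosRank.exists_congr_bananaPath_323 {D : Fin 4 → ℤ}
    (hpr : (bananaPath 3 fun i => if i = 1 then 2 else 3).PosRank D) (v : Fin 4) :
    ∃ E : Fin 4 → ℤ, Effective E ∧ 1 ≤ E v ∧
      E 0 + E 1 + E 2 + E 3 = D 0 + D 1 + D 2 + D 3 ∧ (3 : ℤ) ∣ E 0 - D 0 ∧
      (3 : ℤ) ∣ E 3 - D 3 ∧ (2 : ℤ) ∣ E 0 + E 1 - (D 0 + D 1) := by
  obtain ⟨E, hDE, hE, hv⟩ := hpr v
  have h₀ := hDE.bananaPath_prefix_sum_modEq 0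
  have h₁ := hDE.bananaPath_prefix_sum_modEq 1
  have h₂ := hDE.bananaPath_prefix_sum_modEq 2
  have hdeg := hDE.degree_eq
  refine ⟨E, hE, hv, ?_, ?_, ?_, ?_⟩ <;>
    simp [Finset.sum_filter, Fin.sum_univ_four, degree, Int.modEq_iff_dvd] at h₀ h₁ h₂ hdeg <;>
      omega

theorem bananaPath_323_three_lt_degree {D : Fin 4 → ℤ} (hD : Effective D)
    (hpr : (bananaPath 3 fun i => if i = 1 then 2 else 3).PosRank D) : 3 < degree D := by
  have witness := hpr.exists_congr_bananaPath_323
  rw [degree, Fin.sum_univ_four]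
  by_contra! hd
  have := hD 0; have := hD 1; have := hD 2; have := hD 3
  -- If `3 ∣ D 0` (or `3 ∣ D 3`), the divisors witnessing `v₀` and `v₃` are `3·v₀` and `3·v₃`,
  -- whose numbers of chips on `{v₀, v₁}` have different parities.
  have hD₀ : ¬ (3 : ℤ) ∣ D 0 := by
    intro h
    obtain ⟨E, hE, hE₀, hdegE, hE0, hE3, hE01⟩ := witness 0
    obtain ⟨F, hF, hF₃, hdegF, hF0, hF3, hF01⟩ := witness 3
    have := hE 1; have := hE 2; have := hE 3; have := hF 0; have := hF 1; have := hF 2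
    have : E 0 = 3 := by omega
    have : F 3 = 3 := by omega
    omega
  have hD₃ : ¬ (3 : ℤ) ∣ D 3 := by
    intro h
    obtain ⟨E, hE, hE₃, hdegE, hE0, hE3, hE01⟩ := witness 3
    obtain ⟨F, hF, hF₀, hdegF, hF0, hF3, hF01⟩ := witness 0
    have := hE 0; have := hE 1; have := hE 2; have := hF 1; have := hF 2; have := hF 3
    have : E 3 = 3 := by omega
    have : F 0 = 3 := by omega
    omega
  obtain ⟨E, hE, hE₁, hdegE, hE0, hE3, hE01⟩ := witness 1
  obtain ⟨F, hF, hF₂, hdegF, hF0, hF3, hF01⟩ := witness 2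
  have := hE 0; have := hE 2; have := hE 3; have := hF 0; have := hF 1; have := hF 3
  -- Both ends now keep a chip, which forces `E = v₀ + v₁ + v₃` and `F = v₀ + v₂ + v₃`:
  -- again their parities on `{v₀, v₁}` differ.
  have : 1 ≤ E 0 ∧ 1 ≤ E 3 ∧ 1 ≤ F 0 ∧ 1 ≤ F 3 := by omega
  have : E 0 = 1 ∧ E 1 = 1 ∧ E 3 = 1 ∧ F 0 = 1 ∧ F 2 = 1 ∧ F 3 = 1 := by omega
  omega

end BananaPath

end Multigraph

open Multigraph in
/-- The banana path `B_{(3,3,3)}` has gonality `3`, and the banana path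
`B_{(3,2,3)}` obtained from it by deleting one edge of the middle bunch has gonality `4`. -/
theorem banana_path_333_and_323_gonality :
    (bananaPath 3 (fun _ => 3)).gonality = 3 ∧
    (bananaPath 3 (fun i => if i = 1 then 2 else 3)).gonality = 4 := by
  refine ⟨gonality_bananaPath_const (n := 3) three_pos, le_antisymm ?_ ?_⟩
  · simpa using gonality_le_card (bananaPath 3 fun i => if i = 1 then 2 else 3)
  · exact le_gonality fun D hD hpr => bananaPath_323_three_lt_degree hD hpr
end
end
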